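/- Let a_n be the number of Schröder trees of weight n (so a_0 = 1, a_1 = 1, a_2 = 3, a_3 = 11, …) and let b_n be the number of prime Schröder trees of weight n for n ≥ 1, with b_0 = 1. Then for every n ≥ 1, b_n = Σ_{k=0}^{n−1} a_k · b_{n−1−k}; equivalently, the generating series P = Σ_{n≥0} b_n x^n and S = Σ_{n≥0} a_n x^n satisfy P = 1 + xS/(1 − xS), i.e., P·(1 − xS) = 1. In particular the numbers b_n are the large Schröder numbers. -/

import Mathlib

/-!
A prime tree with `n + 1 ≥ 2` leaves is determined by the list of its root subtrees other than
the final leaf, which is an arbitrary forest of Schröder trees with `n` leaves in total (being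
nonempty, it keeps the root reduced). So `b_n` counts forests with `n` leaves, also for `n = 0`
through the empty forest. Splitting off the first tree of a forest with `n + 1` leaves, of
weight `k`, leaves a forest with `n - k` leaves: this is the recurrence, and coefficientwise
the recurrence says `P = 1 + x S P`.
-/

inductive PTree : Type where
  | node : List PTree → PTree

mutual
  def leavesT : PTree → ℕ
    | .node [] => 1
    | .node (t :: ts) => leavesT t + leavesL ts
  def leavesL : List PTree → ℕ
    | [] => 0
    | t :: ts => leavesT t + leavesL ts
end

inductive Reduced : PTree → Prop where
  | leaf : Reduced (.node [])
  | node : ∀ ts : List PTree, 2 ≤ ts.length → (∀ t ∈ ts, Reduced t) → Reduced (.node ts)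

def IsPrimeTree (t : PTree) : Prop :=
  Reduced t ∧ ∃ ts : List PTree, t = .node ts ∧ ts.getLast? = some (.node [])

/-- `aSch n` = number of Schröder trees of weight `n`. -/
noncomputable def aSch (n : ℕ) : ℕ :=
  {t : PTree | Reduced t ∧ leavesT t = n + 1}.ncard

/-- `bSch n` = number of prime Schröder trees of weight `n` for `n ≥ 1`, with
`bSch 0 = 1`. -/
noncomputable def bSch : ℕ → ℕ
  | 0 => 1
  | n + 1 => {t : PTree | IsPrimeTree t ∧ leavesT t = (n + 1) + 1}.ncard

theorem one_le_leavesT : ∀ t : PTree, 1 ≤ leavesT t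
  | .node [] => le_rfl
  | .node (t :: ts) => by
      rw [leavesT]
      exact (one_le_leavesT t).trans (Nat.le_add_right _ _)

theorem leavesT_node_of_ne_nil {ts : List PTree} (h : ts ≠ []) :
    leavesT (.node ts) = leavesL ts := by
  obtain ⟨t, ts, rfl⟩ := List.exists_cons_of_ne_nil h
  rw [leavesT, leavesL]

theorem leavesL_append (l₁ l₂ : List PTree) :
    leavesL (l₁ ++ l₂) = leavesL l₁ + leavesL l₂ := by
  induction l₁ with
  | nil => simp [leavesL]
  | cons t ts ih => simp only [List.cons_append, leavesL, ih, Nat.add_assoc]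

theorem length_le_leavesL (l : List PTree) : l.length ≤ leavesL l := by
  induction l with
  | nil => simp [leavesL]
  | cons t ts ih =>
    have := one_le_leavesT t
    simp only [List.length_cons, leavesL]
    omega

theorem leavesT_le_leavesL_of_mem {t : PTree} {l : List PTree} (h : t ∈ l) :
    leavesT t ≤ leavesL l := by
  induction l with
  | nil => simp at h
  | cons a ts ih =>
    rw [leavesL]
    rcases List.mem_cons.1 h with rfl | h
    · exact Nat.le_add_right _ _
    · exact (ih h).trans (Nat.le_add_left _ _)

theorem leavesT_lt_leavesL_of_mem {t : PTree} :
    ∀ {l : List PTree}, t ∈ l → 2 ≤ l.length → leavesT t < leavesL l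
  | a :: b :: l, h, _ => by
    have ha := one_le_leavesT a
    have hb := one_le_leavesT b
    rcases List.mem_cons.1 h with rfl | h
    · simp only [leavesL]
      omega
    · have := leavesT_le_leavesL_of_mem h
      simp only [leavesL] at this ⊢
      omega

theorem Set.Finite.setOf_length_le_forall_mem {α : Type*} {s : Set α} (hs : s.Finite) (m : ℕ) :
    {l : List α | l.length ≤ m ∧ ∀ x ∈ l, x ∈ s}.Finite := by
  have := hs.to_subtype
  refine ((List.finite_length_le s m).image (List.map (↑))).subset ?_
  rintro l ⟨hlen, hmem⟩
  lift l to List s using hmem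
  exact ⟨l, by simpa using hlen, rfl⟩

theorem Reduced.of_mem_children {ts : List PTree} (h : Reduced (.node ts)) {t : PTree}
    (ht : t ∈ ts) : Reduced t := by
  cases h with
  | leaf => simp at ht
  | node _ _ h => exact h t ht

theorem Reduced.two_le_length {ts : List PTree} (h : Reduced (.node ts)) (hne : ts ≠ []) :
    2 ≤ ts.length := by
  cases h with
  | leaf => exact absurd rfl hne
  | node _ h _ => exact h

theorem finite_setOf_reduced_leavesT_le (m : ℕ) :
    {t : PTree | Reduced t ∧ leavesT t ≤ m}.Finite := by
  induction m with
  | zero =>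
    refine Set.finite_empty.subset fun t ⟨_, ht⟩ => ?_
    have := one_le_leavesT t
    omega
  | succ m ih =>
    refine ((Set.finite_singleton (PTree.node [])).union
      ((ih.setOf_length_le_forall_mem (m + 1)).image PTree.node)).subset ?_
    rintro ⟨ts⟩ ⟨hred, hleaves⟩
    rcases eq_or_ne ts [] with rfl | hne
    · exact .inl rfl
    rw [leavesT_node_of_ne_nil hne] at hleaves
    refine .inr ⟨ts, ⟨(length_le_leavesL ts).trans hleaves,
      fun t ht => ⟨hred.of_mem_children ht, ?_⟩⟩, rfl⟩
    have := leavesT_lt_leavesL_of_mem ht (hred.two_le_length hne)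
    omega

def reducedTrees (n : ℕ) : Set PTree := {t | Reduced t ∧ leavesT t = n}

def reducedForests (n : ℕ) : Set (List PTree) := {l | (∀ t ∈ l, Reduced t) ∧ leavesL l = n}

theorem reducedTrees_finite (n : ℕ) : (reducedTrees n).Finite :=
  (finite_setOf_reduced_leavesT_le n).subset fun _ ⟨hred, ht⟩ => ⟨hred, ht.le⟩

theorem reducedForests_finite (n : ℕ) : (reducedForests n).Finite := by
  refine ((finite_setOf_reduced_leavesT_le n).setOf_length_le_forall_mem n).subset ?_
  rintro l ⟨hred, rfl⟩
  exact ⟨length_le_leavesL l, fun t ht => ⟨hred t ht, leavesT_le_leavesL_of_mem ht⟩⟩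

theorem reducedForests_zero : reducedForests 0 = {[]} := by
  ext l
  refine ⟨fun ⟨_, hl⟩ => List.eq_nil_of_length_eq_zero ?_, ?_⟩
  · exact Nat.le_zero.1 (hl ▸ length_le_leavesL l)
  · rintro rfl
    exact ⟨by simp, rfl⟩

theorem primeTrees_eq_image_reducedForests (n : ℕ) :
    {t | IsPrimeTree t ∧ leavesT t = n + 1 + 1} =
      (fun l => PTree.node (l ++ [.node []])) '' reducedForests (n + 1) := by
  ext t
  constructor
  · rintro ⟨⟨hred, ts, rfl, hlast⟩, hleaves⟩
    obtain ⟨l, rfl⟩ := List.getLast?_eq_some_iff.1 hlast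
    refine ⟨l, ⟨fun t ht => hred.of_mem_children (by simp [ht]), ?_⟩, rfl⟩
    rw [leavesT_node_of_ne_nil (by simp), leavesL_append] at hleaves
    simpa [leavesL, leavesT] using hleaves
  · rintro ⟨l, ⟨hred, hleaves⟩, rfl⟩
    have hne : l ≠ [] := by rintro rfl; simp [leavesL] at hleaves
    refine ⟨⟨.node _ ?_ ?_, _, rfl, by simp⟩, ?_⟩
    · simpa [Nat.one_le_iff_ne_zero] using hne
    · simpa [or_imp, forall_and, Reduced.leaf] using hred
    · rw [leavesT_node_of_ne_nil (by simp), leavesL_append, hleaves]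
      simp [leavesL, leavesT]

theorem bSch_eq_ncard_reducedForests : ∀ n, bSch n = (reducedForests n).ncard
  | 0 => by simp [bSch, reducedForests_zero]
  | n + 1 => by
    rw [bSch, primeTrees_eq_image_reducedForests]
    refine Set.ncard_image_of_injective _ fun l₁ l₂ h => ?_
    simpa using h

theorem reducedForests_succ (n : ℕ) :
    reducedForests (n + 1) = ⋃ k ∈ Set.Iio (n + 1),
      Function.uncurry List.cons '' reducedTrees (k + 1) ×ˢ reducedForests (n - k) := by
  ext l
  simp only [Set.mem_iUnion, Set.mem_Iio, Set.mem_image, Set.mem_prod, Prod.exists,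
    Function.uncurry_apply_pair]
  constructor
  · rintro ⟨hred, hleaves⟩
    obtain ⟨t, l, rfl⟩ : ∃ t l', l = t :: l' :=
      List.exists_cons_of_ne_nil (by rintro rfl; simp [leavesL] at hleaves)
    rw [leavesL] at hleaves
    have := one_le_leavesT t
    refine ⟨leavesT t - 1, by omega, t, l, ⟨⟨hred t (by simp), by omega⟩, ?_, by omega⟩, rfl⟩
    exact fun u hu => hred u (by simp [hu])
  · rintro ⟨k, hk, t, l, ⟨⟨ht, htl⟩, hl, hll⟩, rfl⟩
    refine ⟨by simpa using ⟨ht, hl⟩, ?_⟩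
    rw [leavesL, htl, hll]
    omega

theorem ncard_reducedForests_succ (n : ℕ) :
    (reducedForests (n + 1)).ncard =
      ∑ k ∈ Finset.range (n + 1),
        (reducedTrees (k + 1)).ncard * (reducedForests (n - k)).ncard := by
  have hcons : Function.Injective (Function.uncurry (@List.cons PTree)) :=
    fun p q h => Prod.ext (List.head_eq_of_cons_eq h) (List.tail_eq_of_cons_eq h)
  have hdisj : (Set.Iio (n + 1)).PairwiseDisjoint fun k =>
      Function.uncurry List.cons '' reducedTrees (k + 1) ×ˢ reducedForests (n - k) := by
    refine fun i _ j _ hij => Set.disjoint_left.2 ?_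
    rintro _ ⟨⟨t, l⟩, ⟨⟨-, hi⟩, -⟩, rfl⟩ ⟨⟨t', l'⟩, ⟨⟨-, hj⟩, -⟩, h⟩
    obtain rfl : t' = t := List.head_eq_of_cons_eq h
    exact hij (by simp_all)
  rw [reducedForests_succ, (Set.finite_Iio _).ncard_biUnion (fun k _ =>
    ((reducedTrees_finite _).prod (reducedForests_finite _)).image _) hdisj,
    ← Finset.coe_range, finsum_mem_coe_finset]
  simp only [Set.ncard_image_of_injective _ hcons, Set.ncard_prod]

theorem PowerSeries.mk_mul_one_sub_X_mul_mk_eq_one {R : Type*} [CommRing R] {a b : ℕ → R}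
    (h₀ : b 0 = 1) (h : ∀ n, b (n + 1) = ∑ k ∈ Finset.range (n + 1), a k * b (n - k)) :
    mk b * (1 - X * mk a) = 1 := by
  have hb : mk b = 1 + X * (mk a * mk b) := by
    ext (_ | n)
    · simp [h₀]
    · rw [map_add, coeff_succ_X_mul, coeff_mul, Finset.Nat.sum_antidiagonal_eq_sum_range_succ
        (fun i j => coeff i (mk a) * coeff j (mk b)), coeff_one, if_neg n.succ_ne_zero, zero_add]
      simp [h]
  linear_combination hb

/-- `b_n = Σ_{k=0}^{n−1} a_k · b_{n−1−k}` for `n ≥ 1`; equivalently,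
the generating series `P = Σ b_n x^n` and `S = Σ a_n x^n` satisfy
`P·(1 − xS) = 1`, i.e. `P = 1 + xS/(1 − xS)`. -/
theorem stmt8 :
    (∀ n : ℕ, 1 ≤ n → bSch n = ∑ k ∈ Finset.range n, aSch k * bSch (n - 1 - k)) ∧
    (PowerSeries.mk (fun n => (bSch n : ℚ))) *
      (1 - PowerSeries.X * PowerSeries.mk (fun n => (aSch n : ℚ))) = 1 := by
  have hrec (n : ℕ) : bSch (n + 1) = ∑ k ∈ Finset.range (n + 1), aSch k * bSch (n - k) := by
    simp only [bSch_eq_ncard_reducedForests, ncard_reducedForests_succ]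
    rfl
  refine ⟨fun n hn => ?_, PowerSeries.mk_mul_one_sub_X_mul_mk_eq_one (by simp [bSch]) ?_⟩
  · obtain ⟨n, rfl⟩ := Nat.exists_eq_add_of_le' hn
    simpa using hrec n
  · intro n
    exact_mod_cast hrec n
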